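/- arXiv:1204.4365 — 3 statements merged into one kernel-verified Lean document; each statement's English description precedes it below -/
import Mathlib

section
/- Let A be an LM_θ-algebra with dual space (X(A),{f_i^A}_{i∈I}). Then the Boolean lattice of all closed, open and modal subsets of X(A) is isomorphic to the lattice of all Boolean LM_θ-congruences on A, via the map G ↦ Θ_OM(G) = {(a,b) ∈ A×A : σ_A(a) △ σ_A(b) ⊆ G}. -/
/-- An LM_θ-algebra over a linearly ordered index set `I`:
a bounded distributive lattice with operations `phi i` and `phibar i`. -/
structure LMAlg (I A : Type*) [LinearOrder I] [DistribLattice A] [BoundedOrder A] where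
  phi : I → A → A
  phibar : I → A → A
  phi_sup : ∀ i x y, phi i (x ⊔ y) = phi i x ⊔ phi i y
  phi_inf : ∀ i x y, phi i (x ⊓ y) = phi i x ⊓ phi i y
  phi_bot : ∀ i, phi i ⊥ = ⊥
  phi_top : ∀ i, phi i ⊤ = ⊤
  sup_phibar : ∀ i x, phi i x ⊔ phibar i x = ⊤
  inf_phibar : ∀ i x, phi i x ⊓ phibar i x = ⊥
  phi_phi : ∀ i j x, phi i (phi j x) = phi j x
  phi_mono : ∀ ⦃i j : I⦄, i ≤ j → ∀ x, phi i x ≤ phi j x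
  determined : ∀ x y, (∀ i, phi i x = phi i y) → x = y

/-- A prime filter of a bounded distributive lattice. -/
structure PrimeFilter (A : Type*) [DistribLattice A] [BoundedOrder A] where
  carrier : Set A
  top_mem : ⊤ ∈ carrier
  bot_notMem : ⊥ ∉ carrier
  mem_of_le : ∀ {a b : A}, a ∈ carrier → a ≤ b → b ∈ carrier
  inf_mem : ∀ {a b : A}, a ∈ carrier → b ∈ carrier → a ⊓ b ∈ carrier
  prime : ∀ {a b : A}, a ⊔ b ∈ carrier → a ∈ carrier ∨ b ∈ carrier

variable {I A : Type*} [LinearOrder I] [DistribLattice A] [BoundedOrder A]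

/-- Prime filters ordered by inclusion. -/
instance : PartialOrder (PrimeFilter A) where
  le P Q := P.carrier ⊆ Q.carrier
  le_refl _ _ hx := hx
  le_trans _ _ _ h1 h2 _ hx := h2 (h1 hx)
  le_antisymm P Q h1 h2 := by
    cases P; cases Q
    simp only [PrimeFilter.mk.injEq]
    exact subset_antisymm h1 h2

/-- The map `σ_A`. -/
def sigmaA (a : A) : Set (PrimeFilter A) := {P | a ∈ P.carrier}

/-- The Priestley topology on the set of prime filters, with sub-basis the sets
`σ_A a` and their complements. -/
instance : TopologicalSpace (PrimeFilter A) :=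
  TopologicalSpace.generateFrom
    (Set.range (sigmaA (A := A)) ∪ Set.range (fun a : A => (sigmaA a)ᶜ))

/-- The map `f_i^A (P) = φ_i⁻¹(P)` on prime filters. -/
def LMAlg.fA (L : LMAlg I A) (i : I) (P : PrimeFilter A) : PrimeFilter A where
  carrier := L.phi i ⁻¹' P.carrier
  top_mem := by simp only [Set.mem_preimage, L.phi_top]; exact P.top_mem
  bot_notMem := by simp only [Set.mem_preimage, L.phi_bot]; exact P.bot_notMem
  mem_of_le := by
    intro a b ha hab
    have h1 : L.phi i b = L.phi i a ⊔ L.phi i b := by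
      rw [← L.phi_sup, sup_eq_right.mpr hab]
    exact P.mem_of_le ha (le_sup_left.trans_eq h1.symm)
  inf_mem := by
    intro a b ha hb
    simp only [Set.mem_preimage, L.phi_inf]
    exact P.inf_mem ha hb
  prime := by
    intro a b h
    simp only [Set.mem_preimage, L.phi_sup] at h
    exact P.prime h

/-- An LM_θ-congruence: a bounded-lattice congruence compatible with all `phi i`, `phibar i`. -/
structure IsLMCongr (L : LMAlg I A) (r : A → A → Prop) : Prop where
  refl : ∀ x, r x x
  symm : ∀ {x y}, r x y → r y x
  trans : ∀ {x y z}, r x y → r y z → r x z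
  sup_congr : ∀ {x y u v}, r x y → r u v → r (x ⊔ u) (y ⊔ v)
  inf_congr : ∀ {x y u v}, r x y → r u v → r (x ⊓ u) (y ⊓ v)
  phi_congr : ∀ (i : I) {x y}, r x y → r (L.phi i x) (L.phi i y)
  phibar_congr : ∀ (i : I) {x y}, r x y → r (L.phibar i x) (L.phibar i y)

/-- A θ-congruence: a lattice congruence `r` with `r x y ↔ ∀ i, r (φ_i x) (φ_i y)`. -/
structure IsThetaCongr (L : LMAlg I A) (r : A → A → Prop) : Prop where
  refl : ∀ x, r x x
  symm : ∀ {x y}, r x y → r y x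
  trans : ∀ {x y z}, r x y → r y z → r x z
  sup_congr : ∀ {x y u v}, r x y → r u v → r (x ⊔ u) (y ⊔ v)
  inf_congr : ∀ {x y u v}, r x y → r u v → r (x ⊓ u) (y ⊓ v)
  theta : ∀ x y, r x y ↔ ∀ i : I, r (L.phi i x) (L.phi i y)

/-- `Y` is semimodal if `f i '' Y ⊆ Y` for all `i`. -/
def Semimodal {I X : Type*} (f : I → X → X) (Y : Set X) : Prop := ∀ i, f i '' Y ⊆ Y

/-- `Y` is modal if `f i ⁻¹' Y = Y` for all `i`. -/
def Modal {I X : Type*} (f : I → X → X) (Y : Set X) : Prop := ∀ i, f i ⁻¹' Y = Y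

/-- `Y` is a θ-subset if `⋃ i, f i '' Y ⊆ Y ⊆ closure (⋃ i, f i '' Y)`. -/
def ThetaSubset {I X : Type*} [TopologicalSpace X] (f : I → X → X) (Y : Set X) : Prop :=
  (⋃ i, f i '' Y) ⊆ Y ∧ Y ⊆ closure (⋃ i, f i '' Y)

/-- The relation `Θ` determined by an (open) subset `G` of the dual space:
`(a,b) ∈ Θ(G)` iff `σ_A a △ σ_A b ⊆ G`. -/
def thetaO (G : Set (PrimeFilter A)) : A → A → Prop :=
  fun a b => symmDiff (sigmaA a) (sigmaA b) ⊆ G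

/-- `r` is the principal LM_θ-congruence generated by `(a,b)`. -/
def IsPrincipalLMCongrOn (L : LMAlg I A) (r : A → A → Prop) (a b : A) : Prop :=
  IsLMCongr L r ∧ r a b ∧ ∀ s, IsLMCongr L s → s a b → ∀ x y, r x y → s x y

/-- `r` is the principal θ-congruence generated by `(a,b)`. -/
def IsPrincipalThetaCongrOn (L : LMAlg I A) (r : A → A → Prop) (a b : A) : Prop :=
  IsThetaCongr L r ∧ r a b ∧ ∀ s, IsThetaCongr L s → s a b → ∀ x y, r x y → s x y

/-- `r` is a principal LM_θ-congruence. -/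
def IsPrincipalLMCongr (L : LMAlg I A) (r : A → A → Prop) : Prop :=
  ∃ a b, IsPrincipalLMCongrOn L r a b

/-- `r` is a principal θ-congruence. -/
def IsPrincipalThetaCongr (L : LMAlg I A) (r : A → A → Prop) : Prop :=
  ∃ a b, IsPrincipalThetaCongrOn L r a b

/-- `r` is a Boolean LM_θ-congruence: a complemented element of the lattice of
LM_θ-congruences ordered by inclusion (the bottom element is equality and the
join of `r` and its complement, i.e. the least congruence containing both, is
the total relation). -/
def IsBooleanLMCongr (L : LMAlg I A) (r : A → A → Prop) : Prop :=
  IsLMCongr L r ∧ ∃ s, IsLMCongr L s ∧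
    (∀ x y, (r x y ∧ s x y) ↔ x = y) ∧
    (∀ t, IsLMCongr L t → (∀ x y, r x y → t x y) → (∀ x y, s x y → t x y) → ∀ x y, t x y)

/-!
Modal subsets of `X(A)` are up-sets: since `φ_i x` and `φ̄_i x` are complements, `f_i` takes the
same value on comparable prime filters. By compactness a clopen up-set of the Priestley space is
`σ_A c` for some `c`, and `Θ_OM (σ_A c)` identifies `a` and `b` iff `a ⊔ c = b ⊔ c`. Conversely
`σ_A c` is modal whenever `c` is complemented, because then both `φ_i c` and its complement
increase with `i`, so `φ_i c` does not depend on `i` and equals `c`.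

Now let `r` be a Boolean congruence with complement `s`. The sets `σ_A a △ σ_A b` with
`r a b` or `s a b` cover `X(A)`, because `Θ_OM` of their union contains `r` and `s`. Pulling such a
set back along `f_i` gives `σ_A (φ_i a ⊓ φ̄_i b)`, and `r` (resp. `s`) collapses `φ_i a ⊓ φ̄_i b`
to `⊥`. Compactness then yields `c ⊔ d = ⊤` with `r ⊥ c` and `s ⊥ d`; so `c` and `d` are
complements and `r = Θ_OM (σ_A c)`.
-/

open Set Filter Topology

theorem Set.inter_symmDiff_inter_subset {α : Type*} {s t u v : Set α} :
    symmDiff (s ∩ t) (u ∩ v) ⊆ symmDiff s u ∪ symmDiff t v := by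
  grind

theorem Set.symmDiff_subset_iff_union_eq_union {α : Type*} {s t u : Set α} :
    symmDiff s t ⊆ u ↔ s ∪ u = t ∪ u := by
  simp only [subset_def, Set.ext_iff, mem_symmDiff, mem_union]
  grind

theorem PrimeFilter.carrier_injective : Function.Injective (PrimeFilter.carrier (A := A)) :=
  fun _ _ h => le_antisymm (fun _ hx => h ▸ hx) (fun _ hx => h ▸ hx)

theorem sigmaA_bot : sigmaA (⊥ : A) = ∅ :=
  eq_empty_iff_forall_notMem.2 fun P => P.bot_notMem

theorem sigmaA_top : sigmaA (⊤ : A) = univ :=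
  eq_univ_of_forall fun P => P.top_mem

theorem sigmaA_mono {a b : A} (h : a ≤ b) : sigmaA a ⊆ sigmaA b :=
  fun P hP => P.mem_of_le hP h

theorem sigmaA_sup (a b : A) : sigmaA (a ⊔ b) = sigmaA a ∪ sigmaA b :=
  Subset.antisymm (fun P h => P.prime h)
    (union_subset (sigmaA_mono le_sup_left) (sigmaA_mono le_sup_right))

theorem sigmaA_inf (a b : A) : sigmaA (a ⊓ b) = sigmaA a ∩ sigmaA b :=
  Subset.antisymm (subset_inter (sigmaA_mono inf_le_left) (sigmaA_mono inf_le_right))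
    fun P h => P.inf_mem h.1 h.2

theorem exists_primeFilter_mem_notMem {a b : A} (h : ¬ a ≤ b) :
    ∃ P : PrimeFilter A, a ∈ P.carrier ∧ b ∉ P.carrier := by
  obtain ⟨J, hJ, hbJ, hdisj⟩ := DistribLattice.prime_ideal_of_disjoint_filter_ideal
    (F := Order.PFilter.principal a) (I := Order.Ideal.principal b)
    (disjoint_left.2 fun x hax hxb =>
      h ((Order.PFilter.mem_principal.1 hax).trans (Order.Ideal.mem_principal.1 hxb)))
  refine ⟨⟨{x | x ∉ J}, hJ.toIsProper.top_notMem, not_not.2 J.bot_mem,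
    fun hx hxy hy => hx (J.lower hxy hy), fun hx hy hxy => (hJ.mem_or_mem hxy).elim hx hy,
    fun hxy => not_and_or.1 fun hc => hxy (J.sup_mem hc.1 hc.2)⟩,
    disjoint_left.1 hdisj (Order.PFilter.mem_principal.2 le_rfl),
    not_not.2 (hbJ Order.Ideal.mem_principal_self)⟩

theorem sigmaA_subset_sigmaA {a b : A} : sigmaA a ⊆ sigmaA b ↔ a ≤ b := by
  refine ⟨fun hs => by_contra fun h => ?_, sigmaA_mono⟩
  obtain ⟨P, haP, hbP⟩ := exists_primeFilter_mem_notMem h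
  exact hbP (hs haP)

theorem sigmaA_injective : Function.Injective (sigmaA (A := A)) := fun _ _ h =>
  le_antisymm (sigmaA_subset_sigmaA.1 h.le) (sigmaA_subset_sigmaA.1 h.ge)

theorem isOpen_sigmaA (a : A) : IsOpen (sigmaA a) :=
  TopologicalSpace.isOpen_generateFrom_of_mem (Or.inl ⟨a, rfl⟩)

theorem isClosed_sigmaA (a : A) : IsClosed (sigmaA a) :=
  ⟨TopologicalSpace.isOpen_generateFrom_of_mem (Or.inr ⟨a, rfl⟩)⟩

/-- The limit of an ultrafilter on the dual space. -/
def PrimeFilter.ofUltrafilter (𝒰 : Ultrafilter (PrimeFilter A)) : PrimeFilter A where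
  carrier := {a | sigmaA a ∈ 𝒰}
  top_mem := show sigmaA ⊤ ∈ 𝒰 by rw [sigmaA_top]; exact univ_mem
  bot_notMem := show sigmaA ⊥ ∉ 𝒰 by rw [sigmaA_bot]; exact Ultrafilter.empty_notMem
  mem_of_le ha hab := mem_of_superset ha (sigmaA_mono hab)
  inf_mem ha hb := show sigmaA _ ∈ 𝒰 by rw [sigmaA_inf]; exact inter_mem ha hb
  prime {a b} h := Ultrafilter.union_mem_iff.1 (sigmaA_sup a b ▸ h)

theorem PrimeFilter.le_nhds_ofUltrafilter (𝒰 : Ultrafilter (PrimeFilter A)) :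
    ↑𝒰 ≤ 𝓝 (PrimeFilter.ofUltrafilter 𝒰) := by
  rw [TopologicalSpace.nhds_generateFrom]
  refine le_iInf₂ fun s ⟨hPs, hs⟩ => le_principal_iff.2 ?_
  rcases hs with ⟨a, rfl⟩ | ⟨a, rfl⟩
  · exact hPs
  · exact Ultrafilter.compl_mem_iff_notMem.2 hPs

instance : CompactSpace (PrimeFilter A) :=
  isCompact_univ_iff.1 <| isCompact_iff_ultrafilter_le_nhds.2 fun 𝒰 _ =>
    ⟨_, mem_univ _, PrimeFilter.le_nhds_ofUltrafilter 𝒰⟩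

theorem IsClosed.exists_subset_sigmaA {K : Set (PrimeFilter A)} (hK : IsClosed K) {S : Set A}
    (hS : SupClosed S) (hne : S.Nonempty) (hcov : K ⊆ ⋃ a ∈ S, sigmaA a) :
    ∃ a ∈ S, K ⊆ sigmaA a := by
  have := hne.to_subtype
  obtain ⟨⟨a, ha⟩, hKa⟩ := hK.isCompact.elim_directed_cover (fun a : S => sigmaA a.1)
    (fun a => isOpen_sigmaA a.1) (by rwa [biUnion_eq_iUnion] at hcov)
    fun a b => ⟨⟨a.1 ⊔ b.1, hS a.2 b.2⟩, sigmaA_mono le_sup_left, sigmaA_mono le_sup_right⟩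
  exact ⟨a, ha, hKa⟩

theorem IsOpen.exists_mem_sigmaA_subset {Y : Set (PrimeFilter A)} (hY : IsOpen Y)
    (hu : IsUpperSet Y) {P : PrimeFilter A} (hP : P ∈ Y) :
    ∃ a ∈ P.carrier, sigmaA a ⊆ Y := by
  have hcov : Yᶜ ⊆ ⋃ a : P.carrier, (sigmaA a.1)ᶜ := fun Q hQ => by
    obtain ⟨a, haP, haQ⟩ := not_subset.1 fun hPQ : P ≤ Q => hQ (hu hPQ hP)
    exact mem_iUnion.2 ⟨⟨a, haP⟩, haQ⟩
  have : Nonempty P.carrier := ⟨⟨⊤, P.top_mem⟩⟩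
  obtain ⟨⟨a, ha⟩, h⟩ := hY.isClosed_compl.isCompact.elim_directed_cover
    (fun a : P.carrier => (sigmaA a.1)ᶜ) (fun a => (isClosed_sigmaA a.1).isOpen_compl) hcov
    fun a b =>
      ⟨⟨a.1 ⊓ b.1, P.inf_mem a.2 b.2⟩, compl_subset_compl.2 (sigmaA_mono inf_le_left),
        compl_subset_compl.2 (sigmaA_mono inf_le_right)⟩
  exact ⟨a, ha, compl_subset_compl.1 h⟩

theorem exists_sigmaA_eq_of_isClopen_of_isUpperSet {Y : Set (PrimeFilter A)} (hc : IsClosed Y)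
    (ho : IsOpen Y) (hu : IsUpperSet Y) : ∃ c, sigmaA c = Y := by
  obtain ⟨c, hcY, hYc⟩ := hc.exists_subset_sigmaA (S := {a | sigmaA a ⊆ Y})
    (fun a ha b hb => show sigmaA _ ⊆ Y by rw [sigmaA_sup]; exact union_subset ha hb)
    ⟨⊥, show sigmaA ⊥ ⊆ Y by rw [sigmaA_bot]; exact empty_subset Y⟩
    fun P hP => by
      obtain ⟨a, haP, haY⟩ := ho.exists_mem_sigmaA_subset hu hP
      exact mem_biUnion haY haP
  exact ⟨c, Subset.antisymm hcY hYc⟩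

theorem IsCompl.sigmaA {a b : A} (h : IsCompl a b) : IsCompl (sigmaA a) (sigmaA b) :=
  IsCompl.of_eq (show _ ∩ _ = ∅ by rw [← sigmaA_inf, h.inf_eq_bot, sigmaA_bot])
    (show _ ∪ _ = univ by rw [← sigmaA_sup, h.sup_eq_top, sigmaA_top])

theorem thetaO_bot_left {G : Set (PrimeFilter A)} {c : A} : thetaO G ⊥ c ↔ sigmaA c ⊆ G := by
  rw [thetaO, sigmaA_bot, ← bot_eq_empty, bot_symmDiff]

theorem thetaO_sigmaA_iff {a b c : A} : thetaO (sigmaA c) a b ↔ a ⊔ c = b ⊔ c := by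
  rw [thetaO, symmDiff_subset_iff_union_eq_union, ← sigmaA_sup, ← sigmaA_sup,
    sigmaA_injective.eq_iff]

section Congr

variable {L : LMAlg I A} {r : A → A → Prop}

theorem IsLMCongr.rel_of_rel_bot_top (hr : IsLMCongr L r) (h : r ⊥ ⊤) (x y : A) : r x y := by
  have hx := hr.sup_congr (hr.refl x) h
  have hy := hr.sup_congr (hr.refl y) h
  rw [sup_bot_eq, sup_top_eq] at hx hy
  exact hr.trans hx (hr.symm hy)

theorem IsLMCongr.rel_bot_sup (hr : IsLMCongr L r) {c d : A} (hc : r ⊥ c) (hd : r ⊥ d) :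
    r ⊥ (c ⊔ d) := by
  simpa only [bot_sup_eq] using hr.sup_congr hc hd

theorem IsLMCongr.rel_bot_inf (hr : IsLMCongr L r) (a : A) {d : A} (hd : r ⊥ d) :
    r ⊥ (a ⊓ d) := by
  simpa only [inf_bot_eq] using hr.inf_congr (hr.refl a) hd

theorem IsLMCongr.rel_sup_of_rel_bot (hr : IsLMCongr L r) (a : A) {c : A} (hc : r ⊥ c) :
    r a (a ⊔ c) := by
  simpa only [sup_bot_eq] using hr.sup_congr (hr.refl a) hc

end Congr

theorem LMAlg.nonempty_index (L : LMAlg I A) (P : PrimeFilter A) : Nonempty I := by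
  by_contra hI
  have : (⊥ : A) = ⊤ := L.determined _ _ fun i => (hI ⟨i⟩).elim
  exact P.bot_notMem (this ▸ P.top_mem)

section LM

variable (L : LMAlg I A)

theorem LMAlg.isCompl_phi_phibar (i : I) (x : A) : IsCompl (L.phi i x) (L.phibar i x) :=
  IsCompl.of_eq (L.inf_phibar i x) (L.sup_phibar i x)

theorem LMAlg.sigmaA_phibar (i : I) (x : A) : sigmaA (L.phibar i x) = (sigmaA (L.phi i x))ᶜ :=
  (L.isCompl_phi_phibar i x).sigmaA.symm.eq_compl

theorem LMAlg.sigmaA_phi_inf_phibar (i : I) (x y : A) :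
    sigmaA (L.phi i x ⊓ L.phibar i y) = L.fA i ⁻¹' (sigmaA x \ sigmaA y) := by
  rw [sigmaA_inf, L.sigmaA_phibar]
  rfl

theorem LMAlg.fA_eq_of_le {P Q : PrimeFilter A} (hPQ : P ≤ Q) (i : I) : L.fA i P = L.fA i Q := by
  refine PrimeFilter.carrier_injective (Set.ext fun x => ⟨fun h => hPQ h, fun hQ => ?_⟩)
  have hsup : L.phi i x ⊔ L.phibar i x ∈ P.carrier := L.sup_phibar i x ▸ P.top_mem
  refine (P.prime hsup).resolve_right fun hbar => Q.bot_notMem ?_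
  rw [← L.inf_phibar i x]
  exact Q.inf_mem hQ (hPQ hbar)

theorem LMAlg.isUpperSet_of_modal {Y : Set (PrimeFilter A)} (hY : Modal L.fA Y) :
    IsUpperSet Y := fun P Q hPQ hP => by
  obtain ⟨i⟩ := L.nonempty_index P
  rw [← hY i] at hP ⊢
  rwa [mem_preimage, ← L.fA_eq_of_le hPQ i]

theorem LMAlg.phi_eq_self_of_isCompl {c d : A} (hcd : IsCompl c d) (i : I) : L.phi i c = c := by
  have hphi : ∀ i, IsCompl (L.phi i c) (L.phi i d) := fun i =>
    IsCompl.of_eq (by rw [← L.phi_inf, hcd.inf_eq_bot, L.phi_bot])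
      (by rw [← L.phi_sup, hcd.sup_eq_top, L.phi_top])
  have hanti : ∀ {i j}, i ≤ j → L.phi j c ≤ L.phi i c := fun hij =>
    (hphi _).le_left_iff.2 ((hphi _).disjoint.mono_right (L.phi_mono hij d))
  refine L.determined _ _ fun j => ?_
  rw [L.phi_phi]
  rcases le_total i j with hij | hji
  · exact le_antisymm (L.phi_mono hij c) (hanti hij)
  · exact le_antisymm (hanti hji) (L.phi_mono hji c)

theorem LMAlg.modal_sigmaA_of_isCompl {c d : A} (hcd : IsCompl c d) :
    Modal L.fA (sigmaA c) := fun i =>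
  show sigmaA (L.phi i c) = sigmaA c by rw [L.phi_eq_self_of_isCompl hcd i]

theorem LMAlg.isLMCongr_thetaO {G : Set (PrimeFilter A)} (hG : ∀ i, L.fA i ⁻¹' G ⊆ G) :
    IsLMCongr L (thetaO G) := by
  have phi_congr : ∀ i {x y}, thetaO G x y → thetaO G (L.phi i x) (L.phi i y) :=
    fun i _ _ h _ hP => hG i (h hP)
  refine ⟨fun x => ?_, fun h => ?_, fun h1 h2 => ?_, fun h1 h2 => ?_, fun h1 h2 => ?_,
    phi_congr, fun i x y h => ?_⟩
  · rw [thetaO, symmDiff_self]; exact empty_subset G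
  · rwa [thetaO, symmDiff_comm]
  · exact (symmDiff_triangle _ _ _).trans (union_subset h1 h2)
  · rw [thetaO, sigmaA_sup, sigmaA_sup]
    exact union_symmDiff_union_subset.trans (union_subset h1 h2)
  · rw [thetaO, sigmaA_inf, sigmaA_inf]
    exact inter_symmDiff_inter_subset.trans (union_subset h1 h2)
  · rw [thetaO, L.sigmaA_phibar, L.sigmaA_phibar, compl_symmDiff_compl]
    exact phi_congr i h

theorem LMAlg.isBooleanLMCongr_thetaO {Y : Set (PrimeFilter A)}
    (hc : IsClosed Y) (ho : IsOpen Y) (hY : Modal L.fA Y) : IsBooleanLMCongr L (thetaO Y) := by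
  have hYc : Modal L.fA Yᶜ := fun i => by rw [preimage_compl, hY i]
  refine ⟨L.isLMCongr_thetaO fun i => (hY i).subset, thetaO Yᶜ,
    L.isLMCongr_thetaO fun i => (hYc i).subset, fun x y => ⟨fun ⟨h, hc⟩ => ?_, ?_⟩,
    fun t ht hr hs => ht.rel_of_rel_bot_top ?_⟩
  · exact sigmaA_injective (symmDiff_eq_bot.1 (subset_empty_iff.1 fun P hP => hc hP (h hP)))
  · rintro rfl
    simp only [thetaO, symmDiff_self, bot_eq_empty, empty_subset, and_self]
  · obtain ⟨c, rfl⟩ := exists_sigmaA_eq_of_isClopen_of_isUpperSet hc ho (L.isUpperSet_of_modal hY)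
    refine ht.trans (hr _ _ (thetaO_bot_left.2 subset_rfl)) (hs _ _ ?_)
    rw [thetaO, sigmaA_top, ← top_eq_univ, symmDiff_top, hnot_eq_compl]

theorem LMAlg.thetaO_le_thetaO_iff {Y Y' : Set (PrimeFilter A)}
    (hc : IsClosed Y) (ho : IsOpen Y) (hY : Modal L.fA Y) : thetaO Y ≤ thetaO Y' ↔ Y ⊆ Y' := by
  refine ⟨fun h => ?_, fun h _ _ hab => hab.trans h⟩
  obtain ⟨c, rfl⟩ := exists_sigmaA_eq_of_isClopen_of_isUpperSet hc ho (L.isUpperSet_of_modal hY)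
  exact thetaO_bot_left.1 (h _ _ (thetaO_bot_left.2 subset_rfl))

end LM

section Support

variable {L : LMAlg I A} {r s : A → A → Prop}

/-- The open subset of the dual space that corresponds to a congruence. -/
def congrSupport (r : A → A → Prop) : Set (PrimeFilter A) :=
  ⋃ (a) (b) (_ : r a b), symmDiff (sigmaA a) (sigmaA b)

theorem mem_congrSupport {P : PrimeFilter A} :
    P ∈ congrSupport r ↔ ∃ a b, r a b ∧ P ∈ symmDiff (sigmaA a) (sigmaA b) := by
  simp only [congrSupport, mem_iUnion, exists_prop]

theorem symmDiff_subset_congrSupport {a b : A} (h : r a b) :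
    symmDiff (sigmaA a) (sigmaA b) ⊆ congrSupport r :=
  fun _ hP => mem_congrSupport.2 ⟨a, b, h, hP⟩

theorem IsLMCongr.preimage_fA_congrSupport_subset (hr : IsLMCongr L r) (i : I) :
    L.fA i ⁻¹' congrSupport r ⊆ congrSupport r := fun _ hP => by
  obtain ⟨a, b, hab, hP⟩ := mem_congrSupport.1 hP
  exact symmDiff_subset_congrSupport (hr.phi_congr i hab) hP

theorem IsLMCongr.rel_bot_phi_inf_phibar (hr : IsLMCongr L r) {x y : A} (h : r x y) (i : I) :
    r ⊥ (L.phi i x ⊓ L.phibar i y) := by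
  have := hr.inf_congr (hr.phi_congr i h) (hr.refl (L.phibar i y))
  rw [L.inf_phibar] at this
  exact hr.symm this

theorem IsLMCongr.exists_rel_bot_mem_sigmaA (hr : IsLMCongr L r) {P : PrimeFilter A} {i : I}
    (hP : L.fA i P ∈ congrSupport r) : ∃ c, r ⊥ c ∧ P ∈ sigmaA c := by
  obtain ⟨x, y, hxy, hP | hP⟩ := mem_congrSupport.1 hP
  · exact ⟨_, hr.rel_bot_phi_inf_phibar hxy i, by rw [L.sigmaA_phi_inf_phibar]; exact hP⟩
  · exact ⟨_, hr.rel_bot_phi_inf_phibar (hr.symm hxy) i,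
      by rw [L.sigmaA_phi_inf_phibar]; exact hP⟩

theorem congrSupport_union_eq_univ (hr : IsLMCongr L r) (hs : IsLMCongr L s)
    (hjoin : ∀ t, IsLMCongr L t → (∀ x y, r x y → t x y) → (∀ x y, s x y → t x y) →
      ∀ x y, t x y) :
    congrSupport r ∪ congrSupport s = univ := by
  have ht := L.isLMCongr_thetaO fun i => by
    rw [preimage_union]
    exact union_subset_union (hr.preimage_fA_congrSupport_subset i)
      (hs.preimage_fA_congrSupport_subset i)
  have := hjoin _ ht (fun _ _ h => (symmDiff_subset_congrSupport h).trans subset_union_left)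
    (fun _ _ h => (symmDiff_subset_congrSupport h).trans subset_union_right) ⊥ ⊤
  rwa [thetaO_bot_left, sigmaA_top, univ_subset_iff] at this

theorem exists_rel_bot_rel_bot_sup_eq_top (hr : IsLMCongr L r) (hs : IsLMCongr L s)
    (hU : congrSupport r ∪ congrSupport s = univ) :
    ∃ c d, r ⊥ c ∧ s ⊥ d ∧ c ⊔ d = ⊤ := by
  obtain ⟨_, ⟨c, d, hc, hd, rfl⟩, hcd⟩ := isClosed_univ.exists_subset_sigmaA
    (S := {e | ∃ c d, r ⊥ c ∧ s ⊥ d ∧ c ⊔ d = e})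
    (by
      rintro _ ⟨c, d, hc, hd, rfl⟩ _ ⟨c', d', hc', hd', rfl⟩
      exact ⟨c ⊔ c', d ⊔ d', hr.rel_bot_sup hc hc', hs.rel_bot_sup hd hd',
        sup_sup_sup_comm c c' d d'⟩)
    ⟨⊥, ⊥, ⊥, hr.refl ⊥, hs.refl ⊥, sup_bot_eq ⊥⟩
    fun P _ => by
      obtain ⟨i⟩ := L.nonempty_index P
      rcases hU.symm ▸ mem_univ (L.fA i P) with h | h
      · obtain ⟨c, hc, hPc⟩ := hr.exists_rel_bot_mem_sigmaA h
        exact mem_biUnion ⟨c, ⊥, hc, hs.refl ⊥, sup_bot_eq c⟩ hPc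
      · obtain ⟨d, hd, hPd⟩ := hs.exists_rel_bot_mem_sigmaA h
        exact mem_biUnion ⟨⊥, d, hr.refl ⊥, hd, bot_sup_eq d⟩ hPd
  rw [← sigmaA_top, sigmaA_subset_sigmaA, top_le_iff] at hcd
  exact ⟨c, d, hc, hd, hcd⟩

theorem IsBooleanLMCongr.exists_isCompl_eq_thetaO (hb : IsBooleanLMCongr L r) :
    ∃ c d : A, IsCompl c d ∧ r = thetaO (sigmaA c) := by
  obtain ⟨hr, s, hs, hmeet, hjoin⟩ := hb
  obtain ⟨c, d, hc, hd, hcd⟩ :=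
    exists_rel_bot_rel_bot_sup_eq_top hr hs (congrSupport_union_eq_univ hr hs hjoin)
  have hinf : c ⊓ d = ⊥ :=
    ((hmeet _ _).1 ⟨inf_comm d c ▸ hr.rel_bot_inf d hc, hs.rel_bot_inf c hd⟩).symm
  refine ⟨c, d, IsCompl.of_eq hinf hcd, funext₂ fun a b => propext ⟨fun hab => ?_, fun hab => ?_⟩⟩
  · -- `s` collapses everything below `d`, so `r` and `s` agree there
    have had : a ⊓ d = b ⊓ d := (hmeet _ _).1
      ⟨hr.inf_congr hab (hr.refl d), hs.trans (hs.symm (hs.rel_bot_inf a hd)) (hs.rel_bot_inf b hd)⟩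
    have hdc : ∀ x, x ⊓ d ⊔ c = x ⊔ c := fun x => by
      rw [sup_inf_right, sup_comm d c, hcd, inf_top_eq]
    rw [thetaO_sigmaA_iff, ← hdc a, ← hdc b, had]
  · rw [thetaO_sigmaA_iff] at hab
    exact hr.trans (hr.rel_sup_of_rel_bot a hc) (hab ▸ hr.symm (hr.rel_sup_of_rel_bot b hc))

end Support

/-- the Boolean lattice of closed, open and modal subsets of `X(A)` is
isomorphic, via `Θ_OM`, to the lattice of Boolean LM_θ-congruences on `A`. -/
theorem stmt15 {I A : Type*} [LinearOrder I] [DistribLattice A] [BoundedOrder A]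
    (L : LMAlg I A) :
    ∃ e : {Y : Set (PrimeFilter A) // IsClosed Y ∧ IsOpen Y ∧ Modal L.fA Y} ≃o
          {r : A → A → Prop // IsBooleanLMCongr L r},
      ∀ Y, (e Y).val = fun a b => symmDiff (sigmaA a) (sigmaA b) ⊆ Y.val := by
  let Θ : {Y : Set (PrimeFilter A) // IsClosed Y ∧ IsOpen Y ∧ Modal L.fA Y} ↪o
      {r : A → A → Prop // IsBooleanLMCongr L r} :=
    OrderEmbedding.ofMapLEIff
      (fun Y => ⟨thetaO Y.1, L.isBooleanLMCongr_thetaO Y.2.1 Y.2.2.1 Y.2.2.2⟩)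
      fun Y _ => L.thetaO_le_thetaO_iff Y.2.1 Y.2.2.1 Y.2.2.2
  refine ⟨OrderIso.ofSurjective Θ fun r => ?_, fun _ => rfl⟩
  obtain ⟨c, d, hcd, hr⟩ := r.2.exists_isCompl_eq_thetaO
  exact ⟨⟨sigmaA c, isClosed_sigmaA c, isOpen_sigmaA c, L.modal_sigmaA_of_isCompl hcd⟩,
    Subtype.ext hr.symm⟩
end

section
/- Let A be an LM_θ-algebra. Then every Boolean LM_θ-congruence on A is both a principal LM_θ-congruence on A and a principal θ-congruence on A. -/
variable {I A : Type*} [LinearOrder I] [DistribLattice A] [BoundedOrder A]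

/-! If `s` is the complement of the Boolean congruence `r`, then `⊥` and `⊤` are joined by a
chain of `r`- and `s`-steps. Applying some `φ_i` turns it into a chain of complemented elements,
along which one builds `e` with `(⊥, e) ∈ r` and `(e, ⊤) ∈ s`. As `r ∩ s` is the identity, `r` is
then the relation `x ⊔ e = y ⊔ e`, which is the least lattice congruence containing `(⊥, e)`; it is a
θ-congruence because the `φ_i` jointly determine elements. -/

open Relation

structure IsLatticeCongr {α : Type*} [Lattice α] (r : α → α → Prop) : Prop where
  refl : ∀ x, r x x
  symm : ∀ {x y}, r x y → r y x
  trans : ∀ {x y z}, r x y → r y z → r x z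
  sup_congr : ∀ {x y u v}, r x y → r u v → r (x ⊔ u) (y ⊔ v)
  inf_congr : ∀ {x y u v}, r x y → r u v → r (x ⊓ u) (y ⊓ v)

namespace IsLatticeCongr

variable {α : Type*} {r s : α → α → Prop} {e : α}

theorem rel_of_sup_eq_sup [Lattice α] [OrderBot α] (hr : IsLatticeCongr r) (he : r ⊥ e)
    {x y : α} (h : x ⊔ e = y ⊔ e) : r x y := by
  have hx : ∀ z, r z (z ⊔ e) := fun z => by simpa using hr.sup_congr (hr.refl z) he
  exact hr.trans (h ▸ hx x) (hr.symm (hx y))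

theorem rel_iff_sup_eq_sup [Lattice α] [BoundedOrder α] (hr : IsLatticeCongr r)
    (hs : IsLatticeCongr s) (hrs : ∀ x y, r x y → s x y → x = y) (hre : r ⊥ e) (hse : s e ⊤)
    (x y : α) : r x y ↔ x ⊔ e = y ⊔ e := by
  refine ⟨fun h => hrs _ _ (hr.sup_congr h (hr.refl e)) ?_, hr.rel_of_sup_eq_sup hre⟩
  have hz : ∀ z, s (z ⊔ e) ⊤ := fun z => by simpa using hs.sup_congr (hs.refl z) hse
  exact hs.trans (hz x) (hs.symm (hz y))

/-- Going backwards along the chain: an `s`-step from `v` to `v' ≥ v` is absorbed by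
replacing the witness `e'` for `v'` with `v ⊔ (e' ⊓ v'ᶜ)`. -/
theorem exists_rel_rel_top_of_reflTransGen [DistribLattice α] [BoundedOrder α]
    (hr : IsLatticeCongr r) (hs : IsLatticeCongr s) {x : α}
    (h : ReflTransGen (fun a b => (r a b ∨ s a b) ∧ IsComplemented b) x ⊤) :
    ∀ v, IsComplemented v → x ≤ v → ∃ e, r v e ∧ s e ⊤ := by
  induction h using ReflTransGen.head_induction_on with
  | refl =>
    intro v _ hv
    exact ⟨⊤, top_le_iff.mp hv ▸ hr.refl ⊤, hs.refl ⊤⟩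
  | @head a c hac _ ih =>
    intro v hv hav
    obtain ⟨hrs, hc⟩ := hac
    have hvv : ∀ {t : α → α → Prop}, IsLatticeCongr t → t a c → t v (v ⊔ c) := fun ht h => by
      simpa [sup_eq_left.mpr hav] using ht.sup_congr (ht.refl v) h
    obtain ⟨e', hre', hse'⟩ := ih (v ⊔ c) (hv.sup hc) le_sup_right
    rcases hrs with h | h
    · exact ⟨e', hr.trans (hvv hr h) hre', hse'⟩
    obtain ⟨c', hcc'⟩ := hv.sup hc
    refine ⟨v ⊔ (e' ⊓ c'), ?_, ?_⟩
    · have h0 : r ⊥ (e' ⊓ c') := by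
        simpa [hcc'.inf_eq_bot] using hr.inf_congr hre' (hr.refl c')
      simpa using hr.sup_congr (hr.refl v) h0
    · have h1 : (v ⊔ c) ⊔ (e' ⊓ c') = (v ⊔ c) ⊔ e' := by
        rw [sup_inf_left, hcc'.sup_eq_top, inf_top_eq]
      have h2 : s ((v ⊔ c) ⊔ e') ⊤ := by simpa using hs.sup_congr (hs.refl (v ⊔ c)) hse'
      exact hs.trans (h1 ▸ hs.sup_congr (hvv hs h) (hs.refl (e' ⊓ c'))) h2

end IsLatticeCongr

theorem Relation.ReflTransGen.map₂ {α : Type*} {R : α → α → Prop} (op : α → α → α)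
    (hl : ∀ {a b} c, R a b → R (op a c) (op b c)) (hr : ∀ {a b} c, R a b → R (op c a) (op c b))
    {x y u v : α} (h₁ : ReflTransGen R x y) (h₂ : ReflTransGen R u v) :
    ReflTransGen R (op x u) (op y v) :=
  (h₁.lift (op · u) fun _ _ h => hl u h).trans (h₂.lift (op y ·) fun _ _ h => hr y h)

namespace LMAlg

theorem isCompl_phi_phibar_s16 (L : LMAlg I A) (i : I) (x : A) : IsCompl (L.phi i x) (L.phibar i x) :=
  ⟨disjoint_iff.mpr (L.inf_phibar i x), codisjoint_iff.mpr (L.sup_phibar i x)⟩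

theorem isComplemented_phi (L : LMAlg I A) (i : I) (x : A) : IsComplemented (L.phi i x) :=
  ⟨_, L.isCompl_phi_phibar_s16 i x⟩

theorem subsingleton_of_isEmpty (L : LMAlg I A) [IsEmpty I] : Subsingleton A :=
  ⟨fun x y => L.determined x y isEmptyElim⟩

theorem sup_eq_sup_of_forall_phi (L : LMAlg I A) {x y e : A}
    (h : ∀ i, L.phi i x ⊔ e = L.phi i y ⊔ e) : x ⊔ e = y ⊔ e :=
  L.determined _ _ fun i => by
    simpa only [L.phi_sup, L.phi_phi] using congrArg (L.phi i) (h i)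

end LMAlg

namespace IsLMCongr

variable {L : LMAlg I A} {r s : A → A → Prop}

theorem toIsLatticeCongr (hr : IsLMCongr L r) : IsLatticeCongr r :=
  ⟨hr.refl, hr.symm, hr.trans, hr.sup_congr, hr.inf_congr⟩

theorem reflTransGen_or (hr : IsLMCongr L r) (hs : IsLMCongr L s) :
    IsLMCongr L (ReflTransGen fun x y => r x y ∨ s x y) := by
  have : Std.Symm fun x y => r x y ∨ s x y := ⟨fun _ _ h => h.imp hr.symm hs.symm⟩
  refine ⟨fun _ => .refl, Std.Symm.symm _ _, .trans, ?_, ?_, ?_, ?_⟩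
  · exact ReflTransGen.map₂ (· ⊔ ·)
      (fun c h => h.imp (hr.sup_congr · (hr.refl c)) (hs.sup_congr · (hs.refl c)))
      (fun c h => h.imp (hr.sup_congr (hr.refl c)) (hs.sup_congr (hs.refl c)))
  · exact ReflTransGen.map₂ (· ⊓ ·)
      (fun c h => h.imp (hr.inf_congr · (hr.refl c)) (hs.inf_congr · (hs.refl c)))
      (fun c h => h.imp (hr.inf_congr (hr.refl c)) (hs.inf_congr (hs.refl c)))
  · exact fun i _ _ h => h.lift (L.phi i) fun _ _ h => h.imp (hr.phi_congr i) (hs.phi_congr i)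
  · exact fun i _ _ h =>
      h.lift (L.phibar i) fun _ _ h => h.imp (hr.phibar_congr i) (hs.phibar_congr i)

/-- Applying some `φ_i` turns a chain from `⊥` to `⊤` into one through complemented elements. -/
theorem exists_rel_bot_rel_top (hr : IsLMCongr L r) (hs : IsLMCongr L s)
    (h : ReflTransGen (fun x y => r x y ∨ s x y) ⊥ ⊤) : ∃ e, r ⊥ e ∧ s e ⊤ := by
  rcases isEmpty_or_nonempty I with hI | ⟨⟨i⟩⟩
  · have := L.subsingleton_of_isEmpty
    exact ⟨⊥, hr.refl ⊥, Subsingleton.elim (⊥ : A) ⊤ ▸ hs.refl ⊥⟩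
  have chain : ReflTransGen (fun a b => (r a b ∨ s a b) ∧ IsComplemented b)
      (L.phi i ⊥) (L.phi i ⊤) := h.lift (L.phi i) fun _ b hab =>
    ⟨hab.imp (hr.phi_congr i) (hs.phi_congr i), L.isComplemented_phi i b⟩
  rw [L.phi_bot, L.phi_top] at chain
  exact hr.toIsLatticeCongr.exists_rel_rel_top_of_reflTransGen hs.toIsLatticeCongr chain ⊥
    isComplemented_bot le_rfl

theorem isThetaCongr_of_rel_iff (hr : IsLMCongr L r) {e : A}
    (he : ∀ x y, r x y ↔ x ⊔ e = y ⊔ e) : IsThetaCongr L r :=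
  ⟨hr.refl, hr.symm, hr.trans, hr.sup_congr, hr.inf_congr, fun x y =>
    ⟨fun h i => hr.phi_congr i h,
      fun h => (he x y).2 (L.sup_eq_sup_of_forall_phi fun i => (he _ _).1 (h i))⟩⟩

end IsLMCongr

theorem IsThetaCongr.toIsLatticeCongr {L : LMAlg I A} {r : A → A → Prop}
    (hr : IsThetaCongr L r) : IsLatticeCongr r :=
  ⟨hr.refl, hr.symm, hr.trans, hr.sup_congr, hr.inf_congr⟩

/-- every Boolean LM_θ-congruence is both a principal LM_θ-congruence and
a principal θ-congruence. -/
theorem stmt16 {I A : Type*} [LinearOrder I] [DistribLattice A] [BoundedOrder A]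
    (L : LMAlg I A) (r : A → A → Prop) (hr : IsBooleanLMCongr L r) :
    IsPrincipalLMCongr L r ∧ IsPrincipalThetaCongr L r := by
  obtain ⟨hr, s, hs, hmeet, hjoin⟩ := hr
  have hjoin_total : ReflTransGen (fun x y => r x y ∨ s x y) ⊥ ⊤ :=
    hjoin _ (hr.reflTransGen_or hs) (fun _ _ h => .single (.inl h))
      (fun _ _ h => .single (.inr h)) ⊥ ⊤
  obtain ⟨e, hre, hse⟩ := hr.exists_rel_bot_rel_top hs hjoin_total
  have key := hr.toIsLatticeCongr.rel_iff_sup_eq_sup hs.toIsLatticeCongr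
    (fun x y h₁ h₂ => (hmeet x y).1 ⟨h₁, h₂⟩) hre hse
  have least : ∀ t, IsLatticeCongr t → t ⊥ e → ∀ x y, r x y → t x y :=
    fun _ ht hte x y hxy => ht.rel_of_sup_eq_sup hte ((key x y).1 hxy)
  exact ⟨⟨⊥, e, hr, hre, fun t ht hte => least t ht.toIsLatticeCongr hte⟩,
    ⟨⊥, e, hr.isThetaCongr_of_rel_iff key, hre, fun t ht hte => least t ht.toIsLatticeCongr hte⟩⟩
end

section
/- Let A be an LM_θ-algebra and let φ₁, φ₂ be Boolean LM_θ-congruences on A. Then φ₁ and φ₂ permute: φ₁ ∘ φ₂ = φ₂ ∘ φ₁ (where (x,y) ∈ φ₂ ∘ φ₁ means there is z with (x,z) ∈ φ₁ and (z,y) ∈ φ₂). -/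
variable {I A : Type*} [LinearOrder I] [DistribLattice A] [BoundedOrder A]

section BooleanPermuteAux

variable {I A : Type*} [LinearOrder I] [DistribLattice A] [BoundedOrder A]

/-- Complements are unique in a bounded distributive lattice. -/
theorem LMAux.compl_unique {a b c : A} (h1 : a ⊓ b = ⊥) (h2 : a ⊔ b = ⊤)
    (h3 : a ⊓ c = ⊥) (h4 : a ⊔ c = ⊤) : b = c := by
  have hb : b = b ⊓ c := by
    calc b = b ⊓ (a ⊔ c) := by rw [h4, inf_top_eq]
    _ = (b ⊓ a) ⊔ (b ⊓ c) := inf_sup_left b a c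
    _ = b ⊓ c := by rw [inf_comm b a, h1, bot_sup_eq]
  have hc : c = b ⊓ c := by
    calc c = c ⊓ (a ⊔ b) := by rw [h2, inf_top_eq]
    _ = (c ⊓ a) ⊔ (c ⊓ b) := inf_sup_left c a b
    _ = b ⊓ c := by rw [inf_comm c a, h3, bot_sup_eq, inf_comm]
  exact hb.trans hc.symm

theorem LMAux.phi_phibar (L : LMAlg I A) (j i : I) (x : A) :
    L.phi j (L.phibar i x) = L.phibar i x := by
  have h1 : L.phi i x ⊓ L.phi j (L.phibar i x) = ⊥ := by
    rw [← L.phi_phi j i x, ← L.phi_inf, L.inf_phibar, L.phi_bot]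
  have h2 : L.phi i x ⊔ L.phi j (L.phibar i x) = ⊤ := by
    rw [← L.phi_phi j i x, ← L.phi_sup, L.sup_phibar, L.phi_top]
  exact LMAux.compl_unique h1 h2 (L.inf_phibar i x) (L.sup_phibar i x)

private theorem bot_of_le {x y : A} (h : x ≤ y) (he : y = ⊥) : x = ⊥ :=
  le_bot_iff.mp (he ▸ h)

/-- Key lemma: a Boolean pair `(r, s)` admits an element `e` with `r e ⊤` and `s e ⊥`. -/
theorem LMAux.exists_unit (L : LMAlg I A) {r s : A → A → Prop}
    (hr : IsLMCongr L r) (hs : IsLMCongr L s)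
    (hmeet : ∀ x y, (r x y ∧ s x y) ↔ x = y)
    (hjoin : ∀ t, IsLMCongr L t → (∀ x y, r x y → t x y) → (∀ x y, s x y → t x y) →
      ∀ x y, t x y) :
    ∃ e : A, r e ⊤ ∧ s e ⊥ := by
  by_contra hno
  push_neg at hno
  -- The filter of elements congruent to ⊤ mod r
  have hF : Order.IsPFilter {a : A | r a ⊤} := by
    refine Order.IsPFilter.of_def ⟨⊤, hr.refl ⊤⟩ ?_ ?_
    · intro x hx y hy
      refine ⟨x ⊓ y, ?_, inf_le_left, inf_le_right⟩
      have h := hr.inf_congr hx hy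
      rwa [inf_idem] at h
    · intro x y hxy hx
      have h := hr.sup_congr hx (hr.refl y)
      rwa [sup_eq_right.mpr hxy, top_sup_eq] at h
  -- The ideal of elements congruent to ⊥ mod s
  have hJ : Order.IsIdeal {a : A | s a ⊥} := by
    refine ⟨?_, ⟨⊥, hs.refl ⊥⟩, ?_⟩
    · intro a b hba ha
      have h := hs.inf_congr (hs.refl b) ha
      rwa [inf_eq_left.mpr hba, inf_bot_eq] at h
    · intro x hx y hy
      refine ⟨x ⊔ y, ?_, le_sup_left, le_sup_right⟩
      have h := hs.sup_congr hx hy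
      rwa [sup_idem] at h
  set F' : Order.PFilter A := hF.toPFilter with hF'def
  set J' : Order.Ideal A := hJ.toIdeal with hJ'def
  have memF : ∀ a : A, a ∈ (F' : Set A) ↔ r a ⊤ := fun a => Iff.rfl
  have memJ : ∀ a : A, a ∈ (J' : Set A) ↔ s a ⊥ := fun a => Iff.rfl
  have hdisj : Disjoint (F' : Set A) (J' : Set A) := by
    rw [Set.disjoint_left]
    intro a haF haJ
    exact hno a ((memF a).mp haF) ((memJ a).mp haJ)
  obtain ⟨Jp, hJpPrime, hJJp, hFJp⟩ :=
    DistribLattice.prime_ideal_of_disjoint_filter_ideal hdisj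
  -- basic facts about the complement of the prime ideal Jp
  have hPtop : (⊤ : A) ∉ Jp :=
    Set.disjoint_left.mp hFJp ((memF ⊤).mpr (hr.refl ⊤))
  have hPbot : (⊥ : A) ∈ Jp := Jp.bot_mem
  have hPup : ∀ a b : A, a ∉ Jp → a ≤ b → b ∉ Jp := fun a b ha hab hb =>
    ha (Jp.lower hab hb)
  have hPinf : ∀ a b : A, a ∉ Jp → b ∉ Jp → a ⊓ b ∉ Jp := fun a b ha hb h =>
    (hJpPrime.mem_or_mem h).elim ha hb
  have hPsup : ∀ a b : A, a ⊔ b ∉ Jp → a ∉ Jp ∨ b ∉ Jp := by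
    intro a b h
    by_contra hc
    push_neg at hc
    exact h (Order.Ideal.sup_mem hc.1 hc.2)
  have hFP : ∀ a : A, r a ⊤ → a ∉ Jp := fun a ha =>
    Set.disjoint_left.mp hFJp ((memF a).mpr ha)
  have hJP : ∀ a : A, s a ⊥ → a ∈ Jp := fun a ha => hJJp ((memJ a).mpr ha)
  have hcomplP : ∀ u u2 : A, u ⊓ u2 = ⊥ → u ⊔ u2 = ⊤ → (u ∉ Jp ↔ u2 ∈ Jp) := by
    intro u u2 h1 h2
    constructor
    · intro hu
      by_contra hu2
      exact (h1 ▸ hPinf u u2 hu hu2) hPbot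
    · intro hu2 hu
      exact hPtop (h2 ▸ Order.Ideal.sup_mem hu hu2)
  -- saturation: from `c ∉ Jp` for `c = (u ⊓ v) ⊔ (u2 ⊓ v2)`
  have hfin : ∀ u v u2 v2 : A, u ⊓ u2 = ⊥ → v ⊓ v2 = ⊥ →
      ((u ⊓ v) ⊔ (u2 ⊓ v2)) ∉ Jp → (u ∉ Jp ↔ v ∉ Jp) := by
    intro u v u2 v2 hu1 hv1 hc
    have hucv : u ⊓ ((u ⊓ v) ⊔ (u2 ⊓ v2)) = u ⊓ v := by
      rw [inf_sup_left]
      have e1 : u ⊓ (u ⊓ v) = u ⊓ v := by rw [← inf_assoc, inf_idem]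
      have e2 : u ⊓ (u2 ⊓ v2) = ⊥ := by rw [← inf_assoc, hu1, bot_inf_eq]
      rw [e1, e2, sup_bot_eq]
    have hvcv : v ⊓ ((u ⊓ v) ⊔ (u2 ⊓ v2)) = u ⊓ v := by
      rw [inf_sup_left]
      have e1 : v ⊓ (u ⊓ v) = u ⊓ v := by
        rw [inf_comm u v, ← inf_assoc, inf_idem]
      have e2 : v ⊓ (u2 ⊓ v2) = ⊥ := by
        rw [inf_comm u2 v2, ← inf_assoc, hv1, bot_inf_eq]
      rw [e1, e2, sup_bot_eq]
    constructor
    · intro hu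
      have h1 := hPinf _ _ hu hc
      rw [hucv] at h1
      exact hPup _ _ h1 inf_le_right
    · intro hv
      have h1 := hPinf _ _ hv hc
      rw [hvcv] at h1
      exact hPup _ _ h1 inf_le_left
  -- the "biconditional" element is outside Jp, for r-related pairs
  have hcr : ∀ a b, r a b → ∀ i : I,
      ((L.phi i a ⊓ L.phi i b) ⊔ (L.phibar i a ⊓ L.phibar i b)) ∉ Jp := by
    intro a b hab i
    apply hFP
    have h1 := hr.inf_congr (hr.phi_congr i hab) (hr.refl (L.phi i b))
    have h2 := hr.inf_congr (hr.phibar_congr i hab) (hr.refl (L.phibar i b))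
    have h3 := hr.sup_congr h1 h2
    rwa [inf_idem, inf_idem, L.sup_phibar] at h3
  -- ... and for s-related pairs
  have hcs : ∀ a b, s a b → ∀ i : I,
      ((L.phi i a ⊓ L.phi i b) ⊔ (L.phibar i a ⊓ L.phibar i b)) ∉ Jp := by
    intro a b hab i
    have hu1 : L.phi i a ⊓ L.phibar i a = ⊥ := L.inf_phibar i a
    have hu2 : L.phi i a ⊔ L.phibar i a = ⊤ := L.sup_phibar i a
    have hv1 : L.phi i b ⊓ L.phibar i b = ⊥ := L.inf_phibar i b
    have hv2 : L.phi i b ⊔ L.phibar i b = ⊤ := L.sup_phibar i b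
    set u := L.phi i a
    set v := L.phi i b
    set u2 := L.phibar i a
    set v2 := L.phibar i b
    have hsc : s ((u ⊓ v) ⊔ (u2 ⊓ v2)) ⊤ := by
      have h1 := hs.inf_congr (hs.phi_congr i hab) (hs.refl v)
      have h2 := hs.inf_congr (hs.phibar_congr i hab) (hs.refl v2)
      have h3 := hs.sup_congr h1 h2
      rwa [inf_idem, inf_idem, hv2] at h3
    have hI3 : ((u ⊓ v2) ⊔ (u2 ⊓ v)) ⊓ ((u ⊓ v) ⊔ (u2 ⊓ v2)) = ⊥ := by
      have t1 : (u ⊓ v2) ⊓ (u ⊓ v) = ⊥ :=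
        bot_of_le (le_inf (inf_le_right.trans inf_le_right)
          (inf_le_left.trans inf_le_right)) hv1
      have t2 : (u ⊓ v2) ⊓ (u2 ⊓ v2) = ⊥ :=
        bot_of_le (le_inf (inf_le_left.trans inf_le_left)
          (inf_le_right.trans inf_le_left)) hu1
      have t3 : (u2 ⊓ v) ⊓ (u ⊓ v) = ⊥ :=
        bot_of_le (le_inf (inf_le_right.trans inf_le_left)
          (inf_le_left.trans inf_le_left)) hu1
      have t4 : (u2 ⊓ v) ⊓ (u2 ⊓ v2) = ⊥ :=
        bot_of_le (le_inf (inf_le_left.trans inf_le_right)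
          (inf_le_right.trans inf_le_right)) hv1
      rw [inf_sup_right, inf_sup_left, inf_sup_left, t1, t2, t3, t4]
      simp
    have hI4 : ((u ⊓ v) ⊔ (u2 ⊓ v2)) ⊔ ((u ⊓ v2) ⊔ (u2 ⊓ v)) = ⊤ := by
      have expand : (u ⊔ u2) ⊓ (v ⊔ v2) =
          ((u ⊓ v) ⊔ (u ⊓ v2)) ⊔ ((u2 ⊓ v) ⊔ (u2 ⊓ v2)) := by
        rw [inf_sup_right, inf_sup_left, inf_sup_left]
      have hac : ((u ⊓ v) ⊔ (u2 ⊓ v2)) ⊔ ((u ⊓ v2) ⊔ (u2 ⊓ v)) =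
          ((u ⊓ v) ⊔ (u ⊓ v2)) ⊔ ((u2 ⊓ v) ⊔ (u2 ⊓ v2)) := by ac_rfl
      rw [hac, ← expand, hu2, hv2, inf_idem]
    have hc2 : s ((u ⊓ v2) ⊔ (u2 ⊓ v)) ⊥ := by
      have h1 := hs.inf_congr (hs.refl ((u ⊓ v2) ⊔ (u2 ⊓ v))) hsc
      rw [inf_top_eq, hI3] at h1
      exact hs.symm h1
    have h4 : ((u ⊓ v2) ⊔ (u2 ⊓ v)) ∈ Jp := hJP _ hc2
    intro hcJ
    exact hPtop (hI4 ▸ Order.Ideal.sup_mem hcJ h4)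
  -- the congruence induced by the prime filter (complement of Jp)
  set T : A → A → Prop := fun a b => ∀ i : I, (L.phi i a ∉ Jp ↔ L.phi i b ∉ Jp)
    with hTdef
  have hsupiff : ∀ a b : A, (a ⊔ b ∉ Jp) ↔ (a ∉ Jp ∨ b ∉ Jp) := by
    intro a b
    constructor
    · exact hPsup a b
    · rintro (h | h) hm
      · exact h (Jp.lower le_sup_left hm)
      · exact h (Jp.lower le_sup_right hm)
  have hinfiff : ∀ a b : A, (a ⊓ b ∉ Jp) ↔ (a ∉ Jp ∧ b ∉ Jp) := by
    intro a b
    constructor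
    · intro h
      exact ⟨hPup _ _ h inf_le_left, hPup _ _ h inf_le_right⟩
    · intro h
      exact hPinf _ _ h.1 h.2
  have hT : IsLMCongr L T := by
    constructor
    · intro x i; exact Iff.rfl
    · intro x y h i; exact (h i).symm
    · intro x y z h1 h2 i; exact (h1 i).trans (h2 i)
    · intro x y u v hxy huv i
      rw [L.phi_sup, L.phi_sup, hsupiff, hsupiff]
      exact or_congr (hxy i) (huv i)
    · intro x y u v hxy huv i
      rw [L.phi_inf, L.phi_inf, hinfiff, hinfiff]
      exact and_congr (hxy i) (huv i)
    · intro i x y h j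
      rw [L.phi_phi j i x, L.phi_phi j i y]
      exact h i
    · intro i x y h j
      rw [LMAux.phi_phibar L j i x, LMAux.phi_phibar L j i y]
      have hx : L.phibar i x ∉ Jp ↔ ¬ (L.phi i x ∉ Jp) :=
        not_iff_not.mpr ((hcomplP _ _ (L.inf_phibar i x) (L.sup_phibar i x)).symm)
      have hy : L.phibar i y ∉ Jp ↔ ¬ (L.phi i y ∉ Jp) :=
        not_iff_not.mpr ((hcomplP _ _ (L.inf_phibar i y) (L.sup_phibar i y)).symm)
      rw [hx, hy]
      exact not_congr (h i)
  have hTr : ∀ x y, r x y → T x y := by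
    intro x y h i
    exact hfin _ _ _ _ (L.inf_phibar i x) (L.inf_phibar i y) (hcr x y h i)
  have hTs : ∀ x y, s x y → T x y := by
    intro x y h i
    exact hfin _ _ _ _ (L.inf_phibar i x) (L.inf_phibar i y) (hcs x y h i)
  have htot : T ⊥ ⊤ := hjoin T hT hTr hTs ⊥ ⊤
  rcases isEmpty_or_nonempty I with hIe | hne
  · have hbt : (⊥ : A) = ⊤ := L.determined ⊥ ⊤ (fun i => isEmptyElim i)
    exact hPtop (hbt ▸ hPbot)
  · obtain ⟨i⟩ := hne
    have h := htot i
    rw [L.phi_bot, L.phi_top] at h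
    exact (h.mpr hPtop) hPbot

/-- A Boolean LM-congruence is the congruence of meeting with a complemented element. -/
theorem LMAux.boolean_char (L : LMAlg I A) {r : A → A → Prop}
    (hr : IsBooleanLMCongr L r) :
    ∃ e e2 : A, e ⊓ e2 = ⊥ ∧ e ⊔ e2 = ⊤ ∧ (∀ x y, r x y ↔ x ⊓ e = y ⊓ e) := by
  obtain ⟨hrc, s, hsc, hmeet, hjoin⟩ := hr
  obtain ⟨e, her, hes⟩ := LMAux.exists_unit L hrc hsc hmeet hjoin
  obtain ⟨e2, he2s, he2r⟩ := LMAux.exists_unit L hsc hrc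
    (fun x y => by rw [← hmeet x y]; exact and_comm)
    (fun t ht h1 h2 => hjoin t ht h2 h1)
  refine ⟨e, e2, ?_, ?_, ?_⟩
  · have h1 : r (e ⊓ e2) ⊥ := by
      have h := hrc.inf_congr (hrc.refl e) he2r
      rwa [inf_bot_eq] at h
    have h2 : s (e ⊓ e2) ⊥ := by
      have h := hsc.inf_congr hes (hsc.refl e2)
      rwa [bot_inf_eq] at h
    exact (hmeet _ _).mp ⟨h1, h2⟩
  · have h1 : r (e ⊔ e2) ⊤ := by
      have h := hrc.sup_congr her (hrc.refl e2)
      rwa [top_sup_eq] at h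
    have h2 : s (e ⊔ e2) ⊤ := by
      have h := hsc.sup_congr (hsc.refl e) he2s
      rwa [sup_top_eq] at h
    exact (hmeet _ _).mp ⟨h1, h2⟩
  · intro x y
    constructor
    · intro hxy
      have h1 : r (x ⊓ e) (y ⊓ e) := hrc.inf_congr hxy (hrc.refl e)
      have hx : s (x ⊓ e) ⊥ := by
        have h := hsc.inf_congr (hsc.refl x) hes
        rwa [inf_bot_eq] at h
      have hy : s (y ⊓ e) ⊥ := by
        have h := hsc.inf_congr (hsc.refl y) hes
        rwa [inf_bot_eq] at h
      exact (hmeet _ _).mp ⟨h1, hsc.trans hx (hsc.symm hy)⟩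
    · intro h
      have hx : r (x ⊓ e) x := by
        have h' := hrc.inf_congr (hrc.refl x) her
        rwa [inf_top_eq] at h'
      have hy : r (y ⊓ e) y := by
        have h' := hrc.inf_congr (hrc.refl y) her
        rwa [inf_top_eq] at h'
      rw [h] at hx
      exact hrc.trans (hrc.symm hx) hy

end BooleanPermuteAux

/-- Boolean LM_θ-congruences permute: `φ₁ ∘ φ₂ = φ₂ ∘ φ₁`, where
`(x,y) ∈ φ₂ ∘ φ₁` means there is `z` with `(x,z) ∈ φ₁` and `(z,y) ∈ φ₂`. -/
theorem stmt17 {I A : Type*} [LinearOrder I] [DistribLattice A] [BoundedOrder A]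
    (L : LMAlg I A) (r s : A → A → Prop)
    (hr : IsBooleanLMCongr L r) (hs : IsBooleanLMCongr L s) :
    ∀ x y : A, (∃ z, s x z ∧ r z y) ↔ ∃ z, r x z ∧ s z y := by
  obtain ⟨e, e2, he1, he2, hche⟩ := LMAux.boolean_char L hr
  obtain ⟨f, f2, hf1, hf2, hchf⟩ := LMAux.boolean_char L hs
  intro x y
  constructor
  · rintro ⟨z, hxz, hzy⟩
    refine ⟨(x ⊓ e) ⊔ (y ⊓ e2), ?_, ?_⟩
    · rw [hche]
      have hw : ((x ⊓ e) ⊔ (y ⊓ e2)) ⊓ e = x ⊓ e := by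
        rw [inf_sup_right]
        have e1' : (x ⊓ e) ⊓ e = x ⊓ e := by rw [inf_assoc, inf_idem]
        have e2' : (y ⊓ e2) ⊓ e = ⊥ := by
          rw [inf_assoc, inf_comm e2 e, he1, inf_bot_eq]
        rw [e1', e2', sup_bot_eq]
      rw [hw]
    · rw [hchf]
      have hxzf : x ⊓ f = z ⊓ f := (hchf x z).mp hxz
      have hzye : z ⊓ e = y ⊓ e := (hche z y).mp hzy
      have key : (x ⊓ e) ⊓ f = (y ⊓ e) ⊓ f := by
        calc (x ⊓ e) ⊓ f = (x ⊓ f) ⊓ e := inf_right_comm x e f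
        _ = (z ⊓ f) ⊓ e := by rw [hxzf]
        _ = (z ⊓ e) ⊓ f := inf_right_comm z f e
        _ = (y ⊓ e) ⊓ f := by rw [hzye]
      calc ((x ⊓ e) ⊔ (y ⊓ e2)) ⊓ f = (x ⊓ e) ⊓ f ⊔ (y ⊓ e2) ⊓ f :=
            inf_sup_right (x ⊓ e) (y ⊓ e2) f
      _ = (y ⊓ e) ⊓ f ⊔ (y ⊓ e2) ⊓ f := by rw [key]
      _ = (y ⊓ f) ⊓ e ⊔ (y ⊓ f) ⊓ e2 := by
            rw [inf_right_comm y e f, inf_right_comm y e2 f]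
      _ = (y ⊓ f) ⊓ (e ⊔ e2) := (inf_sup_left (y ⊓ f) e e2).symm
      _ = y ⊓ f := by rw [he2, inf_top_eq]
  · rintro ⟨z, hxz, hzy⟩
    refine ⟨(y ⊓ e) ⊔ (x ⊓ e2), ?_, ?_⟩
    · rw [hchf]
      have hxze : x ⊓ e = z ⊓ e := (hche x z).mp hxz
      have hzyf : z ⊓ f = y ⊓ f := (hchf z y).mp hzy
      have key : (y ⊓ e) ⊓ f = (x ⊓ e) ⊓ f := by
        calc (y ⊓ e) ⊓ f = (y ⊓ f) ⊓ e := inf_right_comm y e f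
        _ = (z ⊓ f) ⊓ e := by rw [hzyf]
        _ = (z ⊓ e) ⊓ f := inf_right_comm z f e
        _ = (x ⊓ e) ⊓ f := by rw [hxze]
      have hw : ((y ⊓ e) ⊔ (x ⊓ e2)) ⊓ f = x ⊓ f := by
        calc ((y ⊓ e) ⊔ (x ⊓ e2)) ⊓ f = (y ⊓ e) ⊓ f ⊔ (x ⊓ e2) ⊓ f :=
              inf_sup_right (y ⊓ e) (x ⊓ e2) f
        _ = (x ⊓ e) ⊓ f ⊔ (x ⊓ e2) ⊓ f := by rw [key]
        _ = (x ⊓ f) ⊓ e ⊔ (x ⊓ f) ⊓ e2 := by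
              rw [inf_right_comm x e f, inf_right_comm x e2 f]
        _ = (x ⊓ f) ⊓ (e ⊔ e2) := (inf_sup_left (x ⊓ f) e e2).symm
        _ = x ⊓ f := by rw [he2, inf_top_eq]
      rw [hw]
    · rw [hche]
      have hw : ((y ⊓ e) ⊔ (x ⊓ e2)) ⊓ e = y ⊓ e := by
        rw [inf_sup_right]
        have e1' : (y ⊓ e) ⊓ e = y ⊓ e := by rw [inf_assoc, inf_idem]
        have e2' : (x ⊓ e2) ⊓ e = ⊥ := by
          rw [inf_assoc, inf_comm e2 e, he1, inf_bot_eq]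
        rw [e1', e2', sup_bot_eq]
      rw [hw]
end
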